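/- arXiv:1401.6485 — 2 statements merged into one kernel-verified Lean document; each statement's English description precedes it below -/
import Mathlib

section
/- If c = (n,m) is a condition compatible with an axle A, then A ∧ c is an axle; that is, the pair (l',u') defined by the update rule satisfies axioms (A1), (A2), (A3). -/
/-- An axle of degree `d`: a pair of functions `l, u : {1,...,5d} → {5,...,12}`
satisfying (A1), (A2), (A3). -/
def IsAxle (d : ℤ) (l u : ℤ → ℤ) : Prop :=
  (∀ i : ℤ, 1 ≤ i → i ≤ 5 * d → l i ≤ u i) ∧
  (∀ i : ℤ, 1 ≤ i → i ≤ 5 * d →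
    l i ∈ ({5, 6, 7, 8, 9} : Set ℤ) ∧ u i ∈ ({5, 6, 7, 8, 12} : Set ℤ)) ∧
  (∀ i : ℤ, 1 ≤ i → i ≤ d → l i ≠ u i →
    (l (2 * d + i) = 5 ∧ u (2 * d + i) = 12) ∧
    (l (3 * d + i) = 5 ∧ u (3 * d + i) = 12) ∧
    (l (4 * d + i) = 5 ∧ u (4 * d + i) = 12))

/-- A condition of degree `d` is a pair `(n, m)` with `n ∈ {1,...,5d}` and
`m ∈ {-8,-7,-6,-5,6,7,8,9}`. -/
def IsCondition (d n m : ℤ) : Prop :=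
  1 ≤ n ∧ n ≤ 5 * d ∧ m ∈ ({-8, -7, -6, -5, 6, 7, 8, 9} : Set ℤ)

/-- The condition `(n, m)` is compatible with the axle `(l, u)`. -/
def CondCompatible (d : ℤ) (l u : ℤ → ℤ) (n m : ℤ) : Prop :=
  (m < 0 → l n ≤ -m ∧ -m < u n) ∧
  (0 < m → l n < m ∧ m ≤ u n) ∧
  (n ≤ 2 * d ∨ ∃ j i : ℤ, (j = 2 ∨ j = 3 ∨ j = 4) ∧ 1 ≤ i ∧ i ≤ d ∧
      n = j * d + i ∧ l i = u i ∧ j + 4 ≤ u i)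

/-- The lower bounds of `A ∧ c` where `c = (n, m)`. -/
def condLow (l : ℤ → ℤ) (n m : ℤ) : ℤ → ℤ :=
  fun i => if i = n ∧ 0 < m then m else l i

/-- The upper bounds of `A ∧ c` where `c = (n, m)`. -/
def condHigh (u : ℤ → ℤ) (n m : ℤ) : ℤ → ℤ :=
  fun i => if i = n ∧ m < 0 then -m else u i

/-- If `c = (n, m)` is a condition compatible with an axle `A`, then `A ∧ c`
is again an axle, i.e. the updated pair satisfies (A1), (A2), (A3). -/
theorem wedge_cond_isAxle (d : ℤ) (hd : 1 ≤ d) (l u : ℤ → ℤ)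
    (hA : IsAxle d l u) (n m : ℤ) (hc : IsCondition d n m)
    (hcomp : CondCompatible d l u n m) :
    IsAxle d (condLow l n m) (condHigh u n m) := by
  obtain ⟨hA1, hA2, hA3⟩ := hA
  obtain ⟨hn1, hn2, hm⟩ := hc
  obtain ⟨hneg, hpos, hC3⟩ := hcomp
  simp only [Set.mem_insert_iff, Set.mem_singleton_iff] at hm
  refine ⟨?_, ?_, ?_⟩
  · intro i hi1 hi2
    simp only [condLow, condHigh]
    split_ifs with h1 h2 h2
    · exact absurd h2.2 (by linarith [h1.2])
    · obtain ⟨hin, hm0⟩ := h1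
      subst hin
      exact (hpos hm0).2
    · obtain ⟨hin, hm0⟩ := h2
      subst hin
      exact (hneg hm0).1
    · exact hA1 i hi1 hi2
  · intro i hi1 hi2
    constructor
    · simp only [condLow]
      split_ifs with h1
      · simp only [Set.mem_insert_iff, Set.mem_singleton_iff]
        omega
      · exact (hA2 i hi1 hi2).1
    · simp only [condHigh]
      split_ifs with h1
      · simp only [Set.mem_insert_iff, Set.mem_singleton_iff]
        omega
      · exact (hA2 i hi1 hi2).2
  · intro i hi1 hid hne
    have hm0 : m ≠ 0 := by omega
    -- helper: rewrite condLow/condHigh at indices ≠ n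
    have hlow : ∀ p : ℤ, p ≠ n → condLow l n m p = l p := by
      intro p hp; simp [condLow, hp]
    have hhigh : ∀ p : ℤ, p ≠ n → condHigh u n m p = u p := by
      intro p hp; simp [condHigh, hp]
    rcases hC3 with hn2d | ⟨j, i0, hj, hi01, hi0d, hnj, hli0, hju⟩
    · -- n ≤ 2d : positions 2d+i, 3d+i, 4d+i are all > 2d ≥ n
      have h2 : 2 * d + i ≠ n := by omega
      have h3 : 3 * d + i ≠ n := by omega
      have h4 : 4 * d + i ≠ n := by omega
      have hli : l i ≠ u i := by
        by_cases hin : i = n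
        · subst hin
          rcases lt_or_gt_of_ne hm0 with hmneg | hmpos
          · have := hneg hmneg; omega
          · have := hpos hmpos; omega
        · simpa [condLow, condHigh, hin] using hne
      have := hA3 i hi1 hid hli
      rw [hlow _ h2, hlow _ h3, hlow _ h4, hhigh _ h2, hhigh _ h3, hhigh _ h4]
      exact this
    · -- n = j*d + i0 with l i0 = u i0
      have hin : i ≠ n := by
        rcases hj with hj | hj | hj <;> subst hj <;> omega
      have hli : l i ≠ u i := by
        simpa [condLow, condHigh, hin] using hne
      have hkey : ∀ j' : ℤ, (j' = 2 ∨ j' = 3 ∨ j' = 4) → j' * d + i ≠ n := by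
        intro j' hj' heq
        have hii0 : i = i0 := by
          rcases hj with hj | hj | hj <;> rcases hj' with h | h | h <;> subst hj <;> subst h <;> omega
        exact hli (hii0 ▸ hli0)
      have h2 := hkey 2 (Or.inl rfl)
      have h3 := hkey 3 (Or.inr (Or.inl rfl))
      have h4 := hkey 4 (Or.inr (Or.inr rfl))
      have := hA3 i hi1 hid hli
      rw [hlow _ h2, hlow _ h3, hlow _ h4, hhigh _ h2, hhigh _ h3, hhigh _ h4]
      exact this
end

section
/- Every reduced outlet is determined by its enforcement behavior at position 1: if T and T' are reduced outlets of degree d with the same value r(T) = r(T') and such that for every axle A of degree d, (T,1) is enforced by A if and only if (T',1) is enforced by A, then M(T) = M(T'). -/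
/-- The cyclic shift `i ⊕_d x`: `i + x` if `x + ((i - 1) mod d) < d`, and
`i + x - d` otherwise. -/
def oplus (d i x : ℤ) : ℤ :=
  if x + (i - 1) % d < d then i + x else i + x - d

/-- The data `M(T) = {(p₁,l₁,u₁),...,(pₙ,lₙ,uₙ)}` of an outlet of degree `d`,
encoded as a list of triples, satisfying (T1)-(T4). -/
def IsOutletData (d : ℤ) (M : List (ℤ × ℤ × ℤ)) : Prop :=
  (∀ e ∈ M, 1 ≤ e.1 ∧ e.1 ≤ 5 * d ∧ e.2.1 ≤ e.2.2 ∧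
    e.2.1 ∈ ({5, 6, 7, 8, 9} : Set ℤ) ∧ e.2.2 ∈ ({5, 6, 7, 8, 12} : Set ℤ)) ∧
  (∀ e ∈ M, ∀ j i : ℤ, (j = 2 ∨ j = 3 ∨ j = 4) → 1 ≤ i → i ≤ d →
    e.1 = j * d + i → ∃ e' ∈ M, e'.1 = i ∧ e'.2.1 = e'.2.2 ∧ j + 4 ≤ e'.2.1)

/-- The positioned outlet `(T, x)` is enforced by the axle `(lA, uA)`:
`lᵢ ≤ lA(pᵢ ⊕_d (x-1)) ≤ uA(pᵢ ⊕_d (x-1)) ≤ uᵢ` for all `i`. -/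
def Enforced (d : ℤ) (lA uA : ℤ → ℤ) (M : List (ℤ × ℤ × ℤ)) (x : ℤ) : Prop :=
  ∀ e ∈ M, e.2.1 ≤ lA (oplus d e.1 (x - 1)) ∧ uA (oplus d e.1 (x - 1)) ≤ e.2.2

/-- The positioned outlet `(T, x)` is permitted by the axle `(lA, uA)`:
`uᵢ ≥ lA(pᵢ ⊕_d (x-1))` and `uA(pᵢ ⊕_d (x-1)) ≥ lᵢ` for all `i`. -/
def Permitted (d : ℤ) (lA uA : ℤ → ℤ) (M : List (ℤ × ℤ × ℤ)) (x : ℤ) : Prop :=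
  ∀ e ∈ M, lA (oplus d e.1 (x - 1)) ≤ e.2.2 ∧ e.2.1 ≤ uA (oplus d e.1 (x - 1))

/-- The lower bounds of `A ∧ (T, x)`: at coordinate `i`, the least integer
that is `≥ lA i` and `≥ lⱼ` for all `j` with `pⱼ ⊕_d (x-1) = i`. -/
def wedgeLow (d : ℤ) (lA : ℤ → ℤ) (M : List (ℤ × ℤ × ℤ)) (x : ℤ) : ℤ → ℤ :=
  fun i => (M.filter (fun e => oplus d e.1 (x - 1) = i)).foldr
    (fun e a => max e.2.1 a) (lA i)

/-- The upper bounds of `A ∧ (T, x)`: at coordinate `i`, the largest integer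
that is `≤ uA i` and `≤ uⱼ` for all `j` with `pⱼ ⊕_d (x-1) = i`. -/
def wedgeHigh (d : ℤ) (uA : ℤ → ℤ) (M : List (ℤ × ℤ × ℤ)) (x : ℤ) : ℤ → ℤ :=
  fun i => (M.filter (fun e => oplus d e.1 (x - 1) = i)).foldr
    (fun e a => min e.2.2 a) (uA i)

/-- The outlet data is reduced: the `pᵢ` are pairwise distinct and no
`(lᵢ, uᵢ)` equals `(5, 12)`. -/
def ReducedData (M : List (ℤ × ℤ × ℤ)) : Prop :=
  (M.map Prod.fst).Pairwise (· ≠ ·) ∧ ∀ e ∈ M, ¬(e.2.1 = 5 ∧ e.2.2 = 12)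

/-!
The bounds prescribed by an outlet, with the trivial bounds `(5, 12)` at every free position,
form an axle: (T4) is exactly what makes it satisfy (A3). This axle enforces its own outlet at
position 1, hence by hypothesis the other outlet as well, i.e. every entry of the other outlet
is implied by the entry of the first one at the same position (that position is not free,
since a reduced outlet has no entry `(5, 12)`). Running this in both directions, the bounds
agree entrywise.
-/

namespace List

variable {α β : Type*} [DecidableEq α]

theorem mem_of_lookup_eq_some {l : List (α × β)} {a : α} {b : β}
    (h : l.lookup a = some b) : (a, b) ∈ l := by
  obtain ⟨l₁, l₂, rfl, -⟩ := lookup_eq_some_iff.mp h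
  simp

theorem lookup_eq_some_of_mem {l : List (α × β)} (hl : (l.map Prod.fst).Nodup)
    {a : α} {b : β} (hab : (a, b) ∈ l) : l.lookup a = some b := by
  induction l with
  | nil => cases hab
  | cons y l ih =>
    obtain ⟨k, v⟩ := y
    rw [map_cons, nodup_cons] at hl
    rcases mem_cons.mp hab with h | hmem
    · simp_all
    · have hne : a ≠ k := fun h => hl.1 (h ▸ (mem_map_of_mem hmem : a ∈ l.map Prod.fst))
      simp [lookup_cons, beq_false_of_ne hne, ih hl.2 hmem]

end List

theorem oplus_zero_right {d : ℤ} (hd : 0 < d) (i : ℤ) : oplus d i 0 = i := by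
  rw [oplus, if_pos (by simpa using Int.emod_lt_of_pos (i - 1) hd), add_zero]

theorem enforced_one_iff {d : ℤ} {M : List (ℤ × ℤ × ℤ)} (hM : IsOutletData d M)
    (l u : ℤ → ℤ) : Enforced d l u M 1 ↔ ∀ e ∈ M, e.2.1 ≤ l e.1 ∧ u e.1 ≤ e.2.2 := by
  refine forall₂_congr fun e he => ?_
  have hd : 0 < d := by linarith [(hM.1 e he).1, (hM.1 e he).2.1]
  rw [sub_self, oplus_zero_right hd]

def boundsAt (M : List (ℤ × ℤ × ℤ)) (p : ℤ) : ℤ × ℤ :=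
  (M.lookup p).getD (5, 12)

theorem boundsAt_eq_or_mem (M : List (ℤ × ℤ × ℤ)) (p : ℤ) :
    boundsAt M p = (5, 12) ∨ (p, boundsAt M p) ∈ M := by
  unfold boundsAt
  cases h : M.lookup p with
  | none => exact Or.inl rfl
  | some b => exact Or.inr (List.mem_of_lookup_eq_some h)

theorem boundsAt_of_mem {M : List (ℤ × ℤ × ℤ)} (hM : (M.map Prod.fst).Nodup)
    {e : ℤ × ℤ × ℤ} (he : e ∈ M) : boundsAt M e.1 = e.2 := by
  obtain ⟨p, b⟩ := e
  rw [boundsAt, List.lookup_eq_some_of_mem hM he, Option.getD_some]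

section OutletAxle

variable {d : ℤ} {M : List (ℤ × ℤ × ℤ)}

theorem isAxle_boundsAt (hM : IsOutletData d M) (hnd : (M.map Prod.fst).Nodup) :
    IsAxle d (fun p => (boundsAt M p).1) (fun p => (boundsAt M p).2) := by
  have hrange : ∀ p, (boundsAt M p).1 ≤ (boundsAt M p).2 ∧
      (boundsAt M p).1 ∈ ({5, 6, 7, 8, 9} : Set ℤ) ∧
      (boundsAt M p).2 ∈ ({5, 6, 7, 8, 12} : Set ℤ) := fun p => by
    rcases boundsAt_eq_or_mem M p with h | h
    · simp [h]
    · exact (hM.1 _ h).2.2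
  have htrivial : ∀ j i, (j = 2 ∨ j = 3 ∨ j = 4) → 1 ≤ i → i ≤ d →
      (boundsAt M i).1 ≠ (boundsAt M i).2 → boundsAt M (j * d + i) = (5, 12) := by
    intro j i hj hi hid hne
    refine (boundsAt_eq_or_mem M _).resolve_right fun hmem => hne ?_
    obtain ⟨e, he, rfl, hlu, -⟩ := hM.2 _ hmem j i hj hi hid rfl
    rwa [boundsAt_of_mem hnd he]
  refine ⟨fun p _ _ => (hrange p).1, fun p _ _ => (hrange p).2, ?_⟩
  intro i hi hid hne
  simp only [htrivial 2 i (by norm_num) hi hid hne, htrivial 3 i (by norm_num) hi hid hne,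
    htrivial 4 i (by norm_num) hi hid hne, and_self]

theorem enforced_boundsAt_self (hM : IsOutletData d M) (hnd : (M.map Prod.fst).Nodup) :
    Enforced d (fun p => (boundsAt M p).1) (fun p => (boundsAt M p).2) M 1 :=
  (enforced_one_iff hM _ _).2 fun e he => by simp [boundsAt_of_mem hnd he]

theorem mem_of_le_boundsAt {M' : List (ℤ × ℤ × ℤ)} (hM' : IsOutletData d M')
    (hred' : ReducedData M') {e : ℤ × ℤ × ℤ} (he : e ∈ M')
    (hl : e.2.1 ≤ (boundsAt M e.1).1) (hu : (boundsAt M e.1).2 ≤ e.2.2) :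
    (e.1, boundsAt M e.1) ∈ M := by
  refine (boundsAt_eq_or_mem M e.1).resolve_left fun htriv => hred'.2 e he ?_
  obtain ⟨-, -, -, hl5, hu12⟩ := hM'.1 e he
  rw [htriv] at hl hu
  simp only [Set.mem_insert_iff, Set.mem_singleton_iff] at hl5 hu12
  omega

theorem subset_of_enforced_iff {M' : List (ℤ × ℤ × ℤ)}
    (hM : IsOutletData d M) (hM' : IsOutletData d M')
    (hred : ReducedData M) (hred' : ReducedData M')
    (h : ∀ l u : ℤ → ℤ, IsAxle d l u → (Enforced d l u M 1 ↔ Enforced d l u M' 1)) :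
    M ⊆ M' := by
  have hM'M := (enforced_one_iff hM _ _).1
    ((h _ _ (isAxle_boundsAt hM' hred'.1)).2 (enforced_boundsAt_self hM' hred'.1))
  have hMM' := (enforced_one_iff hM' _ _).1
    ((h _ _ (isAxle_boundsAt hM hred.1)).1 (enforced_boundsAt_self hM hred.1))
  intro e he
  obtain ⟨hl, hu⟩ := hM'M e he
  have hb : (e.1, boundsAt M' e.1) ∈ M' := mem_of_le_boundsAt hM hred he hl hu
  obtain ⟨hl', hu'⟩ := hMM' _ hb
  rw [boundsAt_of_mem hred.1 he] at hl' hu'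
  have heq : boundsAt M' e.1 = e.2 := Prod.ext (le_antisymm hl' hl) (le_antisymm hu hu')
  rwa [heq] at hb

end OutletAxle

theorem reduced_outlet_unique_general (d : ℤ)
    (M M' : List (ℤ × ℤ × ℤ))
    (hM : IsOutletData d M) (hM' : IsOutletData d M')
    (hred : ReducedData M) (hred' : ReducedData M')
    (h : ∀ l u : ℤ → ℤ, IsAxle d l u →
      (Enforced d l u M 1 ↔ Enforced d l u M' 1)) :
    ∀ e, e ∈ M ↔ e ∈ M' :=
  fun _ =>
    ⟨fun he => subset_of_enforced_iff hM hM' hred hred' h he,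
      fun he => subset_of_enforced_iff hM' hM hred' hred (fun l u hA => (h l u hA).symm) he⟩

/-- A reduced outlet is determined by its enforcement behavior at position 1:
if two reduced outlets of degree `d` with the same value are enforced at
position 1 by exactly the same axles, then they have the same data. -/
theorem reduced_outlet_unique (d : ℤ) (hd : 5 ≤ d)
    (M M' : List (ℤ × ℤ × ℤ)) (r r' : ℤ) (hr : r ≠ 0) (hr' : r' ≠ 0)
    (hM : IsOutletData d M) (hM' : IsOutletData d M')
    (hred : ReducedData M) (hred' : ReducedData M') (hrr : r = r')
    (h : ∀ l u : ℤ → ℤ, IsAxle d l u →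
      (Enforced d l u M 1 ↔ Enforced d l u M' 1)) :
    ∀ e, e ∈ M ↔ e ∈ M' :=
  reduced_outlet_unique_general d M M' hM hM' hred hred' h
end
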